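/- Let A ⊆ ℕ. Then the decoding oracle d_{H₀^A, H₁^A} is T1-equivalent to the characteristic function of A: d_{H₀^A, H₁^A} has an extension recursive in the characteristic function of A, and the characteristic function of A is recursive in d_{H₀^A, H₁^A}. -/

import Mathlib

open Classical in
/-- The oracle game: the list of previous answers by Merlin up to stage `i`,
for the answer sequence `s`. -/
def prefixList (s : ℕ → ℕ) (i : ℕ) : List ℕ := List.ofFn (fun j : Fin i => s j)

/-- A winning Arthur+Nimue strategy for the reduction game of the basic oracle `ℱ`
to the basic oracle `𝒢`. -/
def Winning (ℱ 𝒢 : Set (Set ℕ)) (σ : List ℕ →. Option ℕ) (ν : Set ℕ → List ℕ → Set ℕ) : Prop :=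
  (∀ F ∈ ℱ, ∀ l : List ℕ, ν F l ∈ 𝒢) ∧
  ∀ F ∈ ℱ, ∀ s : ℕ → ℕ, (∀ i, s i ∈ ν F (prefixList s i)) →
    ∃ k, (∀ i ≤ k, (σ (prefixList s i)).Dom) ∧
      (∀ i < k, none ∈ σ (prefixList s i)) ∧
      ∃ u ∈ F, some u ∈ σ (prefixList s k)

/-- The encoding of an Arthur strategy as a partial function `ℕ →. ℕ`, via the
standard Mathlib encodings of `List ℕ` and `Option ℕ`. -/
def arthurCode (σ : List ℕ →. Option ℕ) : ℕ →. ℕ :=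
  fun n => (σ (Denumerable.ofNat (List ℕ) n)).map Encodable.encode

open Classical in
/-- The decoding oracle associated to the promise problem `(P, Q)`: value `0` on `P`,
value `1` on `Q`, undefined elsewhere. -/
noncomputable def dOracle (P Q : Set ℕ) : ℕ →. ℕ :=
  fun n => ⟨n ∈ P ∪ Q, fun _ => if n ∈ Q then 1 else 0⟩

open Classical in
/-- The characteristic function of a set of naturals. -/
noncomputable def chi (A : Set ℕ) : ℕ → ℕ := fun n => if n ∈ A then 1 else 0

/-- The coded cartesian product of two sets of naturals. -/
def tensor (P Q : Set ℕ) : Set ℕ := {x | ∃ p ∈ P, ∃ q ∈ Q, x = Nat.pair p q}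

infixl:70 " ⊗ " => tensor

/-- Oracle computability, as in Mathlib's `Nat.RecursiveIn`. -/
inductive Nat.RecursiveInOracle (g : ℕ →. ℕ) : (ℕ →. ℕ) → Prop
  | zero : Nat.RecursiveInOracle g fun _ => 0
  | succ : Nat.RecursiveInOracle g Nat.succ
  | left : Nat.RecursiveInOracle g fun n => (Nat.unpair n).1
  | right : Nat.RecursiveInOracle g fun n => (Nat.unpair n).2
  | oracle : Nat.RecursiveInOracle g g
  | pair {f h : ℕ →. ℕ} (hf : Nat.RecursiveInOracle g f) (hh : Nat.RecursiveInOracle g h) :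
      Nat.RecursiveInOracle g fun n => (Nat.pair <$> f n <*> h n)
  | comp {f h : ℕ →. ℕ} (hf : Nat.RecursiveInOracle g f) (hh : Nat.RecursiveInOracle g h) :
      Nat.RecursiveInOracle g fun n => h n >>= f
  | prec {f h : ℕ →. ℕ} (hf : Nat.RecursiveInOracle g f) (hh : Nat.RecursiveInOracle g h) :
      Nat.RecursiveInOracle g
        (Nat.unpaired fun a n =>
          n.rec (f a) fun y IH => do
            let i ← IH
            h (Nat.pair a (Nat.pair y i)))
  | rfind {f : ℕ →. ℕ} (hf : Nat.RecursiveInOracle g f) :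
      Nat.RecursiveInOracle g fun a =>
        Nat.rfind fun n => (fun m => m = 0) <$> f (Nat.pair a n)

/-- `f` is T1-reducible to `g`: some partial function recursive in the oracle `g`
extends `f`. -/
def T1Reducible (f g : ℕ →. ℕ) : Prop :=
  ∃ h : ℕ →. ℕ, Nat.RecursiveInOracle g h ∧ ∀ n : ℕ, ∀ a ∈ f n, a ∈ h n

/-- `f` is T1-computable: it has a partial computable extension. -/
def T1Computable (f : ℕ →. ℕ) : Prop :=
  ∃ h : ℕ →. ℕ, Nat.Partrec h ∧ ∀ n : ℕ, ∀ a ∈ f n, a ∈ h n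

/-- Codes for oracle computations: Mathlib's `Nat.Partrec.Code` extended by an
`oracle` constructor. -/
inductive OCode : Type
  | zero : OCode
  | succ : OCode
  | left : OCode
  | right : OCode
  | oracle : OCode
  | pair : OCode → OCode → OCode
  | comp : OCode → OCode → OCode
  | prec : OCode → OCode → OCode
  | rfind' : OCode → OCode

/-- Evaluation of an oracle code relative to the oracle `g`, by the same structural
recursion as Mathlib's `Nat.Partrec.Code.eval`. -/
def OCode.eval (g : ℕ →. ℕ) : OCode → ℕ →. ℕ
  | .zero => pure 0
  | .succ => Nat.succ
  | .left => ↑fun n : ℕ => n.unpair.1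
  | .right => ↑fun n : ℕ => n.unpair.2
  | .oracle => g
  | .pair cf cg => fun n => Nat.pair <$> cf.eval g n <*> cg.eval g n
  | .comp cf cg => fun n => cg.eval g n >>= cf.eval g
  | .prec cf cg =>
    Nat.unpaired fun a n =>
      n.rec (cf.eval g a) fun y IH => do
        let i ← IH
        cg.eval g (Nat.pair a (Nat.pair y i))
  | .rfind' cf =>
    Nat.unpaired fun a m =>
      (Nat.rfind fun n => (fun m => m = 0) <$> cf.eval g (Nat.pair a (n + m))).map (· + m)

/-- The `n`-th oracle code. -/
def OCode.ofNat : ℕ → OCode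
  | 0 => .zero
  | 1 => .succ
  | 2 => .left
  | 3 => .right
  | 4 => .oracle
  | n + 5 =>
    have h1 : (n / 4).unpair.1 < n + 5 :=
      lt_of_le_of_lt (le_trans (Nat.unpair_left_le _) (Nat.div_le_self _ _)) (by omega)
    have h2 : (n / 4).unpair.2 < n + 5 :=
      lt_of_le_of_lt (le_trans (Nat.unpair_right_le _) (Nat.div_le_self _ _)) (by omega)
    if n % 4 = 0 then .pair (OCode.ofNat (n / 4).unpair.1) (OCode.ofNat (n / 4).unpair.2)
    else if n % 4 = 1 then .comp (OCode.ofNat (n / 4).unpair.1) (OCode.ofNat (n / 4).unpair.2)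
    else if n % 4 = 2 then .prec (OCode.ofNat (n / 4).unpair.1) (OCode.ofNat (n / 4).unpair.2)
    else .rfind' (OCode.ofNat (n / 4).unpair.1)

/-- `φ_e^g`: the evaluation of the `e`-th oracle code relative to the oracle `g`. -/
def phi (g : ℕ →. ℕ) (e : ℕ) : ℕ →. ℕ := (OCode.ofNat e).eval g

/-- `H_i^A`: the set of (codes of) oracle programs which, run with the characteristic
function of `A` as oracle, halt on input `0` with output `i`. -/
def Hset (A : Set ℕ) (i : ℕ) : Set ℕ := {e : ℕ | (i : ℕ) ∈ phi (chi A) e 0}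

/-!
`χ_A` is recovered from the decoding oracle by querying it at the index of the program
"ask the oracle at `n`": run with oracle `χ_A` it outputs `χ_A n ∈ {0, 1}`, so that index lies
in `H_0^A ∪ H_1^A` and the decoding oracle returns `χ_A n` there.

Conversely, the decoding oracle is extended by `e ↦ φ_e^A 0`, and the universal function
`⟨e, n⟩ ↦ φ_e^g n` is recursive in every total `g`. By finite use, a halting computation queries
only a finite prefix of `g`, and a code with oracle calls translates into an ordinary Mathlib code
that reads such a prefix, given as a list, from its input. Searching, relative to `g`, for a prefix
length and a step bound at which `Code.evaln` halts therefore computes `φ_e^g n`.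
-/

open Encodable Filter
open Nat.Partrec (Code)

theorem Part.map_le_map {α β : Type*} (f : α → β) {x y : Part α} (h : x ≤ y) :
    x.map f ≤ y.map f := fun _ hb => by
  obtain ⟨a, ha, rfl⟩ := Part.mem_map_iff _ |>.1 hb
  exact Part.mem_map f (h _ ha)

theorem Part.bind_le_bind {α β : Type*} {x y : Part α} {f f' : α → Part β} (hxy : x ≤ y)
    (hf : ∀ a ∈ x, f a ≤ f' a) : x.bind f ≤ y.bind f' := fun _ hb => by
  obtain ⟨a, ha, hb⟩ := Part.mem_bind_iff.1 hb
  exact Part.mem_bind_iff.2 ⟨a, hxy _ ha, hf a ha _ hb⟩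

theorem Part.eventually_le_of_mem {ι α : Type*} {l : Filter ι} {x : Part α} {y : ι → Part α}
    {a : α} (ha : a ∈ x) (h : ∀ᶠ i in l, a ∈ y i) : ∀ᶠ i in l, x ≤ y i :=
  h.mono fun _ hi _ hb => Part.mem_unique ha hb ▸ hi

@[simp] theorem Part.some_bind_pfun (a : ℕ) (f : ℕ →. ℕ) : Part.some a >>= f = f a :=
  Part.bind_some a f

theorem Nat.mem_rfind_of_forall_le {p q : ℕ →. Bool} {n : ℕ} (hn : n ∈ Nat.rfind p)
    (h : ∀ m ≤ n, p m ≤ q m) : n ∈ Nat.rfind q :=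
  Nat.mem_rfind.2 ⟨h n le_rfl _ (Nat.rfind_spec hn), fun hm => h _ hm.le _ (Nat.rfind_min hn hm)⟩

theorem Nat.eventually_mem_rfind {ι : Type*} {l : Filter ι} {p : ℕ →. Bool} {q : ι → ℕ →. Bool}
    {n : ℕ} (hn : n ∈ Nat.rfind p) (h : ∀ m ≤ n, ∀ b ∈ p m, ∀ᶠ i in l, b ∈ q i m) :
    ∀ᶠ i in l, n ∈ Nat.rfind (q i) := by
  have hle : ∀ m ∈ Set.Iic n, ∀ᶠ i in l, p m ≤ q i m := fun m hm => by
    obtain ⟨b, hb⟩ : ∃ b, b ∈ p m := (Set.mem_Iic.1 hm).lt_or_eq.elim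
      (fun hm => ⟨_, Nat.rfind_min hn hm⟩) (fun hm => hm ▸ ⟨_, Nat.rfind_spec hn⟩)
    exact Part.eventually_le_of_mem hb (h m hm b hb)
  exact ((eventually_all_finite (Set.finite_Iic n)).2 hle).mono fun _ hi =>
    Nat.mem_rfind_of_forall_le hn hi

def ComputableInOracle (g : ℕ →. ℕ) (f : ℕ → ℕ) : Prop :=
  Nat.RecursiveInOracle g fun n => Part.some (f n)

namespace Nat.RecursiveInOracle

variable {g : ℕ →. ℕ}

theorem of_eq {f f' : ℕ →. ℕ} (hf : Nat.RecursiveInOracle g f) (h : ∀ n, f n = f' n) :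
    Nat.RecursiveInOracle g f' :=
  funext h ▸ hf

theorem of_partrec {f : ℕ →. ℕ} (hf : Nat.Partrec f) : Nat.RecursiveInOracle g f := by
  induction hf with
  | zero => exact .zero
  | succ => exact .succ
  | left => exact .left
  | right => exact .right
  | pair _ _ ihf ihh => exact .pair ihf ihh
  | comp _ _ ihf ihh => exact .comp ihf ihh
  | prec _ _ ihf ihh => exact .prec ihf ihh
  | rfind _ ihf => exact .rfind ihf

end Nat.RecursiveInOracle

namespace ComputableInOracle

variable {g : ℕ →. ℕ} {f h : ℕ → ℕ}

theorem of_primrec (hf : Primrec f) : ComputableInOracle g f :=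
  .of_partrec (Nat.Partrec.of_primrec (Primrec.nat_iff.1 hf))

theorem oracle (f : ℕ → ℕ) : ComputableInOracle f f := Nat.RecursiveInOracle.oracle

theorem comp (hf : ComputableInOracle g f) (hh : ComputableInOracle g h) :
    ComputableInOracle g fun n => f (h n) :=
  (Nat.RecursiveInOracle.comp hf hh).of_eq fun _ => Part.bind_some _ _

theorem pair (hf : ComputableInOracle g f) (hh : ComputableInOracle g h) :
    ComputableInOracle g fun n => Nat.pair (f n) (h n) :=
  (Nat.RecursiveInOracle.pair hf hh).of_eq fun n => by simp [Seq.seq]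

theorem nat_rec (c : ℕ) {s : ℕ → ℕ} (hs : ComputableInOracle g s) :
    ComputableInOracle g fun n =>
      Nat.rec (motive := fun _ => ℕ) c (fun y i => s (Nat.pair y i)) n := by
  have hstep : ComputableInOracle g fun x => s x.unpair.2 :=
    hs.comp (of_primrec (Primrec.snd.comp Primrec.unpair))
  have hrec : ComputableInOracle g fun p =>
      Nat.rec (motive := fun _ => ℕ) c (fun y i => s (Nat.pair y i)) p.unpair.2 := by
    refine (Nat.RecursiveInOracle.prec (of_primrec (g := g) (Primrec.const c)) hstep).of_eq ?_
    intro p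
    simp only [Nat.unpaired]
    induction p.unpair.2 with
    | zero => rfl
    | succ m ih => exact (congrArg (Part.bind · _) ih).trans (by simp)
  exact (hrec.comp (of_primrec (Primrec₂.natPair.comp (Primrec.const 0) Primrec.id))).of_eq
    fun n => by simp

end ComputableInOracle

theorem recursiveInOracle_rfindOpt {g : ℕ →. ℕ} {F : ℕ → ℕ → Option ℕ}
    (hF : ComputableInOracle g fun p => encode (F p.unpair.1 p.unpair.2)) :
    Nat.RecursiveInOracle g fun x => Nat.rfindOpt (F x) := by
  -- `encode none = 0` and `encode (some b) = b + 1`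
  have htest : ComputableInOracle g fun p =>
      if encode (F p.unpair.1 p.unpair.2) = 0 then 1 else 0 :=
    (ComputableInOracle.of_primrec (Primrec.ite (Primrec.eq.comp Primrec.id (Primrec.const 0))
      (Primrec.const 1) (Primrec.const 0))).comp hF
  have hget : ComputableInOracle g fun p => encode (F p.unpair.1 p.unpair.2) - 1 :=
    (ComputableInOracle.of_primrec (Primrec.nat_sub.comp Primrec.id (Primrec.const 1))).comp hF
  refine (Nat.RecursiveInOracle.comp hget
    (.pair (ComputableInOracle.of_primrec Primrec.id) (.rfind htest))).of_eq fun x => ?_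
  have hsearch : (fun n => (fun m => decide (m = 0)) <$> Part.some
      (if encode (F (Nat.pair x n).unpair.1 (Nat.pair x n).unpair.2) = 0 then 1 else 0))
      = fun n => ((F x n).isSome : Part Bool) := by
    funext n
    simp only [Nat.unpair_pair]
    cases F x n <;> rfl
  simp only [hsearch]
  simp only [Seq.seq, Nat.rfindOpt, id, Part.bind_eq_bind, Part.map_eq_map, Part.map_some,
    Part.bind_some, Part.bind_map, Nat.unpair_pair]
  refine Part.ext fun a => ?_
  simp only [Part.mem_bind_iff]
  refine exists_congr fun m => and_congr_right fun hm => ?_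
  obtain ⟨b, hb⟩ := Option.isSome_iff_exists.1 (by simpa using Nat.rfind_spec hm)
  simp [hb]

namespace OCode

def toNat : OCode → ℕ
  | zero => 0
  | succ => 1
  | left => 2
  | right => 3
  | oracle => 4
  | pair a b => 4 * Nat.pair a.toNat b.toNat + 5
  | comp a b => 4 * Nat.pair a.toNat b.toNat + 1 + 5
  | prec a b => 4 * Nat.pair a.toNat b.toNat + 2 + 5
  | rfind' a => 4 * Nat.pair a.toNat 0 + 3 + 5

theorem ofNat_toNat (c : OCode) : ofNat c.toNat = c := by
  induction c with
  | pair a b iha ihb | comp a b iha ihb | prec a b iha ihb =>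
    rw [toNat, ofNat]
    simp [Nat.mul_add_div, iha, ihb]
  | rfind' a iha =>
    rw [toNat, ofNat]
    simp [Nat.mul_add_div, iha]
  | _ => simp [toNat, ofNat]

protected def const : ℕ → OCode
  | 0 => zero
  | n + 1 => comp succ (OCode.const n)

theorem eval_const (g : ℕ →. ℕ) (n x : ℕ) : (OCode.const n).eval g x = Part.some n := by
  induction n with
  | zero => rfl
  | succ n ih => simp [OCode.const, eval, ih]

def query (n : ℕ) : OCode := comp oracle (OCode.const n)

theorem eval_query (g : ℕ →. ℕ) (n x : ℕ) : (query n).eval g x = g n := by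
  simp [query, eval, eval_const]

theorem primrec_toNat_query : Primrec fun n => (query n).toNat := by
  have hconst : Primrec fun n => (OCode.const n).toNat := by
    refine (Primrec.nat_rec₁ 0 (Primrec.nat_add.comp (Primrec.nat_mul.comp (Primrec.const 4)
      (Primrec₂.natPair.comp (Primrec.const 1) Primrec.snd)) (Primrec.const 6)).to₂).of_eq ?_
    intro n
    induction n with
    | zero => rfl
    | succ n ih => simp [OCode.const, toNat, ih]
  exact (Primrec.nat_add.comp (Primrec.nat_mul.comp (Primrec.const 4)
    (Primrec₂.natPair.comp (Primrec.const 4) hconst)) (Primrec.const 6)).of_eq fun n => rfl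

theorem eval_prec_zero (g : ℕ →. ℕ) (cf cg : OCode) (a : ℕ) :
    (prec cf cg).eval g (Nat.pair a 0) = cf.eval g a := by
  simp [eval]

theorem eval_prec_succ (g : ℕ →. ℕ) (cf cg : OCode) (a k : ℕ) :
    (prec cf cg).eval g (Nat.pair a (k + 1)) =
      (prec cf cg).eval g (Nat.pair a k) >>= fun i => cg.eval g (Nat.pair a (Nat.pair k i)) := by
  simp [eval]

theorem eval_mono {g g' : ℕ →. ℕ} (h : ∀ n, g n ≤ g' n) (c : OCode) (n : ℕ) :
    c.eval g n ≤ c.eval g' n := by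
  induction c generalizing n with
  | zero | succ | left | right => exact le_rfl
  | oracle => exact h n
  | pair cf cg ihf ihg =>
    exact Part.bind_le_bind (Part.map_le_map _ (ihf n)) fun _ _ => Part.map_le_map _ (ihg n)
  | comp cf cg ihf ihg => exact Part.bind_le_bind (ihg n) fun a _ => ihf a
  | prec cf cg ihf ihg =>
    obtain ⟨x, m, rfl⟩ : ∃ x m, n = Nat.pair x m := ⟨_, _, (Nat.pair_unpair n).symm⟩
    induction m with
    | zero => simpa only [eval_prec_zero] using ihf _
    | succ m ihm =>
      simp only [eval_prec_succ]
      exact Part.bind_le_bind ihm fun i _ => ihg _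
  | rfind' cf ihf =>
    intro a ha
    simp only [eval, Nat.unpaired] at ha ⊢
    obtain ⟨j, hj, rfl⟩ := (Part.mem_map_iff _).1 ha
    exact Part.mem_map _ (Nat.mem_rfind_of_forall_le hj fun _ _ => Part.map_le_map _ (ihf _))

end OCode

theorem phi_toNat_query (g : ℕ →. ℕ) (n x : ℕ) : phi g (OCode.query n).toNat x = g n := by
  rw [phi, OCode.ofNat_toNat, OCode.eval_query]

def listOracle (L : List ℕ) : ℕ →. ℕ := fun q => L[q]?

section listOracle

variable (g : ℕ → ℕ) {k q : ℕ}

theorem listOracle_range_map_le : listOracle ((List.range k).map g) q ≤ Part.some (g q) := by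
  intro a ha
  obtain ⟨i, hi, rfl⟩ : ∃ i, (List.range k)[q]? = some i ∧ g i = a := by
    simpa [listOracle] using ha
  obtain ⟨_, rfl⟩ := List.getElem?_eq_some_iff.1 hi
  simp

theorem mem_listOracle_range_map (hq : q < k) : g q ∈ listOracle ((List.range k).map g) q := by
  simp [listOracle, hq]

end listOracle

theorem OCode.eventually_mem_eval_listOracle (g : ℕ → ℕ) (c : OCode) {n a : ℕ}
    (h : a ∈ c.eval g n) : ∀ᶠ k in atTop, a ∈ c.eval (listOracle ((List.range k).map g)) n := by
  induction c generalizing n a with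
  | zero | succ | left | right => exact .of_forall fun _ => h
  | oracle =>
    obtain rfl : a = g n := Part.mem_some_iff.1 h
    exact (eventually_gt_atTop n).mono fun _ => mem_listOracle_range_map g
  | pair cf cg ihf ihg =>
    simp only [eval, Seq.seq, Part.mem_bind_iff, Part.map_eq_map, Part.mem_map_iff] at h ⊢
    obtain ⟨_, ⟨u, hu, rfl⟩, v, hv, rfl⟩ := h
    exact ((ihf hu).and (ihg hv)).mono fun _ ⟨hu, hv⟩ => ⟨_, ⟨u, hu, rfl⟩, v, hv, rfl⟩
  | comp cf cg ihf ihg =>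
    obtain ⟨m, hm, ha⟩ := Part.mem_bind_iff.1 h
    exact ((ihg hm).and (ihf ha)).mono fun _ ⟨hm, ha⟩ => Part.mem_bind_iff.2 ⟨m, hm, ha⟩
  | prec cf cg ihf ihg =>
    obtain ⟨x, m, rfl⟩ : ∃ x m, n = Nat.pair x m := ⟨_, _, (Nat.pair_unpair n).symm⟩
    induction m generalizing a with
    | zero => simpa only [eval_prec_zero] using ihf (by simpa only [eval_prec_zero] using h)
    | succ m ihm =>
      simp only [eval_prec_succ] at h ⊢
      obtain ⟨i, hi, ha⟩ := Part.mem_bind_iff.1 h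
      exact ((ihm hi).and (ihg ha)).mono fun _ ⟨hi, ha⟩ => Part.mem_bind_iff.2 ⟨i, hi, ha⟩
  | rfind' cf ihf =>
    simp only [eval, Nat.unpaired] at h ⊢
    obtain ⟨j, hj, rfl⟩ := (Part.mem_map_iff _).1 h
    refine (Nat.eventually_mem_rfind hj fun _ _ b hb => ?_).mono fun _ => Part.mem_map _
    obtain ⟨v, hv, rfl⟩ := (Part.mem_map_iff _).1 hb
    exact (ihf hv).mono fun _ => Part.mem_map _

namespace OCode

theorem partrec_listOracle :
    Nat.Partrec fun p => listOracle (Denumerable.ofNat (List ℕ) p.unpair.1) p.unpair.2 :=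
  Partrec.nat_iff.1 (Primrec.to_comp (Primrec.list_getElem?.comp
    ((Primrec.ofNat (List ℕ)).comp (Primrec.fst.comp Primrec.unpair))
    (Primrec.snd.comp Primrec.unpair))).ofOption

noncomputable def listOracleCode : Code :=
  Classical.choose (Nat.Partrec.Code.exists_code.1 partrec_listOracle)

theorem eval_listOracleCode (L : List ℕ) (q : ℕ) :
    listOracleCode.eval (Nat.pair (encode L) q) = listOracle L q := by
  rw [listOracleCode, Classical.choose_spec (Nat.Partrec.Code.exists_code.1 partrec_listOracle)]
  simp

def assocCode : Code :=
  .pair (.comp .left .left) (.pair (.comp .right .left) .right)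

def unassocCode : Code :=
  .pair (.pair .left (.comp .left .right)) (.comp .right .right)

theorem eval_assocCode (u v w : ℕ) :
    assocCode.eval (Nat.pair (Nat.pair u v) w) = Part.some (Nat.pair u (Nat.pair v w)) := by
  simp [assocCode, Code.eval, Seq.seq]

theorem eval_unassocCode (u v w : ℕ) :
    unassocCode.eval (Nat.pair u (Nat.pair v w)) = Part.some (Nat.pair (Nat.pair u v) w) := by
  simp [unassocCode, Code.eval, Seq.seq]

noncomputable def toCode : OCode → Code
  | zero => .zero
  | succ => .comp .succ .right
  | left => .comp .left .right
  | right => .comp .right .right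
  | oracle => listOracleCode
  | pair cf cg => .pair cf.toCode cg.toCode
  | comp cf cg => .comp cf.toCode (.pair .left cg.toCode)
  | prec cf cg => .comp (.prec cf.toCode (.comp cg.toCode assocCode)) unassocCode
  | rfind' cf => .comp (.rfind' (.comp cf.toCode assocCode)) unassocCode

theorem eval_toCode (L : List ℕ) (c : OCode) (n : ℕ) :
    c.toCode.eval (Nat.pair (encode L) n) = c.eval (listOracle L) n := by
  induction c generalizing n with
  | zero => rfl
  | succ | left | right => simp [toCode, Code.eval, eval]
  | oracle => exact eval_listOracleCode L n
  | pair cf cg ihf ihg => simp [toCode, Code.eval, eval, ihf, ihg]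
  | comp cf cg ihf ihg =>
    simp only [toCode, Code.eval, eval, Seq.seq, ihg, PFun.coe_val, Nat.unpair_pair,
      Part.map_eq_map, Part.map_some, Part.bind_some]
    exact (Part.bind_map _ _ _).trans (congrArg _ (funext ihf))
  | prec cf cg ihf ihg =>
    obtain ⟨x, m, rfl⟩ : ∃ x m, n = Nat.pair x m := ⟨_, _, (Nat.pair_unpair n).symm⟩
    show unassocCode.eval _ >>= _ = _
    rw [eval_unassocCode, Part.some_bind_pfun]
    induction m with
    | zero => rw [Code.eval_prec_zero, eval_prec_zero, ihf]
    | succ m ihm =>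
      rw [Code.eval_prec_succ, eval_prec_succ, ihm]
      simp [Code.eval, eval_assocCode, ihg]
  | rfind' cf ihf =>
    obtain ⟨x, m, rfl⟩ : ∃ x m, n = Nat.pair x m := ⟨_, _, (Nat.pair_unpair n).symm⟩
    simp [toCode, Code.eval, eval, eval_unassocCode, eval_assocCode, ihf]

def compoundCode (r : ℕ) (a b : Code) : Code :=
  if r = 0 then .pair a b
  else if r = 1 then .comp a (.pair .left b)
  else if r = 2 then .comp (.prec a (.comp b assocCode)) unassocCode
  else .comp (.rfind' (.comp a assocCode)) unassocCode

theorem toCode_ofNat_add_five (n : ℕ) :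
    (ofNat (n + 5)).toCode =
      compoundCode (n % 4) (ofNat (n / 4).unpair.1).toCode (ofNat (n / 4).unpair.2).toCode := by
  rw [ofNat]
  split_ifs <;> simp [toCode, compoundCode, *]

theorem primrec_compoundCode :
    Primrec fun t : ℕ × Code × Code => compoundCode t.1 t.2.1 t.2.2 := by
  have ha : Primrec fun t : ℕ × Code × Code => t.2.1 := Primrec.fst.comp Primrec.snd
  have hb : Primrec fun t : ℕ × Code × Code => t.2.2 := Primrec.snd.comp Primrec.snd
  have hr (i : ℕ) : PrimrecPred fun t : ℕ × Code × Code => t.1 = i :=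
    Primrec.eq.comp Primrec.fst (Primrec.const i)
  open Nat.Partrec.Code in
  exact Primrec.ite (hr 0) (primrec₂_pair.comp ha hb) <|
    Primrec.ite (hr 1) (primrec₂_comp.comp ha (primrec₂_pair.comp (Primrec.const _) hb)) <|
    Primrec.ite (hr 2) (primrec₂_comp.comp (primrec₂_prec.comp ha
      (primrec₂_comp.comp hb (Primrec.const _))) (Primrec.const _)) <|
    primrec₂_comp.comp (primrec_rfind'.comp (primrec₂_comp.comp ha (Primrec.const _)))
      (Primrec.const _)

-- One step of the course-of-values recursion behind `OCode.ofNat`, for `Primrec.nat_strong_rec`.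
noncomputable def toCodeStep (l : List Code) : Option Code :=
  if l.length < 5 then ([zero, succ, left, right, oracle].map toCode)[l.length]?
  else l[((l.length - 5) / 4).unpair.1]?.bind fun a =>
    l[((l.length - 5) / 4).unpair.2]?.map (compoundCode ((l.length - 5) % 4) a)

theorem toCodeStep_range_map (e : ℕ) :
    toCodeStep ((List.range e).map fun i => (ofNat i).toCode) = some (ofNat e).toCode := by
  rcases e with _ | _ | _ | _ | _ | n
  iterate 5 simp [toCodeStep, ofNat]
  have hget (i : ℕ) (hi : i ≤ n / 4) :
      ((List.range (n + 5)).map fun i => (ofNat i).toCode)[i]? = some (ofNat i).toCode := by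
    simp [List.getElem?_range (show i < n + 5 by omega)]
  simp [toCodeStep, hget _ (Nat.unpair_left_le _), hget _ (Nat.unpair_right_le _),
    toCode_ofNat_add_five]

theorem primrec_toCodeStep : Primrec toCodeStep := by
  have hlen : Primrec fun l : List Code => l.length := Primrec.list_length
  have hq : Primrec fun l : List Code => (l.length - 5) / 4 :=
    Primrec.nat_div.comp (Primrec.nat_sub.comp hlen (Primrec.const 5)) (Primrec.const 4)
  have hr : Primrec fun l : List Code => (l.length - 5) % 4 :=
    Primrec.nat_mod.comp (Primrec.nat_sub.comp hlen (Primrec.const 5)) (Primrec.const 4)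
  have hcompound : Primrec fun l : List Code =>
      l[((l.length - 5) / 4).unpair.1]?.bind fun a =>
        l[((l.length - 5) / 4).unpair.2]?.map (compoundCode ((l.length - 5) % 4) a) :=
    Primrec.option_bind
      (Primrec.list_getElem?.comp Primrec.id (Primrec.fst.comp (Primrec.unpair.comp hq)))
      (Primrec.option_map (Primrec.list_getElem?.comp Primrec.fst
        (Primrec.snd.comp (Primrec.unpair.comp (hq.comp Primrec.fst))))
        (primrec_compoundCode.comp ((hr.comp (Primrec.fst.comp Primrec.fst)).pair
          ((Primrec.snd.comp Primrec.fst).pair Primrec.snd))).to₂).to₂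
  exact Primrec.ite (Primrec.nat_lt.comp hlen (Primrec.const 5))
    ((Primrec.list_getElem?₁ _).comp hlen) hcompound

theorem primrec_toCode_ofNat : Primrec fun e => (ofNat e).toCode :=
  (Primrec.nat_strong_rec (fun (_ : Unit) e => (ofNat e).toCode)
    (primrec_toCodeStep.comp Primrec.snd).to₂ fun _ e => toCodeStep_range_map e).comp
    (Primrec.const ()) Primrec.id

end OCode

theorem computableInOracle_encode_prefix (g : ℕ → ℕ) :
    ComputableInOracle g fun k => encode ((List.range k).map g) := by
  have hsnoc : Primrec fun z : ℕ =>
      encode (Denumerable.ofNat (List ℕ) z.unpair.2 ++ [z.unpair.1]) :=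
    Primrec.encode.comp (Primrec.list_concat.comp
      ((Primrec.ofNat (List ℕ)).comp (Primrec.snd.comp Primrec.unpair))
      (Primrec.fst.comp Primrec.unpair))
  have hstep : ComputableInOracle g fun x =>
      encode (Denumerable.ofNat (List ℕ) x.unpair.2 ++ [g x.unpair.1]) := by
    simpa only [Nat.unpair_pair] using (ComputableInOracle.of_primrec hsnoc).comp
      (((ComputableInOracle.oracle g).comp (.of_primrec (Primrec.fst.comp Primrec.unpair))).pair
        (.of_primrec (Primrec.snd.comp Primrec.unpair)))
  have hrec (k : ℕ) : encode ((List.range k).map g) = Nat.rec (motive := fun _ => ℕ) 0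
      (fun y i => encode (Denumerable.ofNat (List ℕ) i ++ [g y])) k := by
    induction k with
    | zero => rfl
    | succ k ih =>
      change _ = encode (Denumerable.ofNat (List ℕ) (Nat.rec _ _ k) ++ [g k])
      rw [← ih, Denumerable.ofNat_encode, List.range_succ, List.map_append, List.map_singleton]
  simpa only [Nat.unpair_pair, ← hrec] using hstep.nat_rec 0

-- `p` codes a program and its input `⟨e, n⟩`, `m` a prefix length and a step bound.
noncomputable def runPrefix (g : ℕ → ℕ) (p m : ℕ) : Option ℕ :=
  Code.evaln m.unpair.2 (OCode.ofNat p.unpair.1).toCode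
    (Nat.pair (encode ((List.range m.unpair.1).map g)) p.unpair.2)

section runPrefix

variable (g : ℕ → ℕ)

theorem computableInOracle_runPrefix :
    ComputableInOracle g fun q => encode (runPrefix g q.unpair.1 q.unpair.2) := by
  have hrun : Primrec fun z : ℕ => encode (Code.evaln z.unpair.1.unpair.2.unpair.2
      (OCode.ofNat z.unpair.1.unpair.1.unpair.1).toCode
      (Nat.pair z.unpair.2 z.unpair.1.unpair.1.unpair.2)) := by
    have h1 : Primrec fun z : ℕ => z.unpair.1 := Primrec.fst.comp Primrec.unpair
    have h2 : Primrec fun z : ℕ => z.unpair.2 := Primrec.snd.comp Primrec.unpair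
    exact Primrec.encode.comp (Code.primrec_evaln.comp
      (((h2.comp (h2.comp h1)).pair (OCode.primrec_toCode_ofNat.comp (h1.comp (h1.comp h1)))).pair
        (Primrec₂.natPair.comp h2 (h2.comp (h1.comp h1)))))
  simpa only [Nat.unpair_pair, id, runPrefix] using (ComputableInOracle.of_primrec hrun).comp
    ((ComputableInOracle.of_primrec Primrec.id).pair ((computableInOracle_encode_prefix g).comp
      (.of_primrec (Primrec.fst.comp (Primrec.unpair.comp (Primrec.snd.comp Primrec.unpair))))))

variable {g}

theorem mem_phi_of_mem_runPrefix {p m a : ℕ} (h : a ∈ runPrefix g p m) :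
    a ∈ phi g p.unpair.1 p.unpair.2 := by
  have := Code.evaln_sound h
  rw [OCode.eval_toCode] at this
  exact OCode.eval_mono (fun q => listOracle_range_map_le g) _ _ _ this

theorem exists_mem_runPrefix_of_mem_phi {p a : ℕ} (h : a ∈ phi g p.unpair.1 p.unpair.2) :
    ∃ m, a ∈ runPrefix g p m := by
  obtain ⟨k, hk⟩ := (OCode.eventually_mem_eval_listOracle g _ h).exists
  rw [← OCode.eval_toCode] at hk
  obtain ⟨t, ht⟩ := Code.evaln_complete.1 hk
  exact ⟨Nat.pair k t, by simpa [runPrefix] using ht⟩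

theorem phi_eq_rfindOpt_runPrefix (p : ℕ) :
    phi g p.unpair.1 p.unpair.2 = Nat.rfindOpt (runPrefix g p) := by
  refine Part.ext fun a => ⟨fun ha => ?_, fun ha => ?_⟩
  · obtain ⟨m, hm⟩ := exists_mem_runPrefix_of_mem_phi ha
    have hb := Part.get_mem (Nat.rfindOpt_dom.2 ⟨m, a, hm⟩)
    obtain ⟨m', hm'⟩ := Nat.rfindOpt_spec hb
    rwa [Part.mem_unique ha (mem_phi_of_mem_runPrefix hm')]
  · obtain ⟨m, hm⟩ := Nat.rfindOpt_spec ha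
    exact mem_phi_of_mem_runPrefix hm

end runPrefix

theorem recursiveInOracle_phi (g : ℕ → ℕ) : Nat.RecursiveInOracle g (Nat.unpaired (phi g)) :=
  (recursiveInOracle_rfindOpt (computableInOracle_runPrefix g)).of_eq fun p =>
    (phi_eq_rfindOpt_runPrefix p).symm

theorem chi_le_one (A : Set ℕ) (n : ℕ) : chi A n ≤ 1 := by
  unfold chi; split <;> omega

section Hset

variable {A : Set ℕ} {e : ℕ}

theorem dOracle_Hset_eq_some {i : ℕ} (h : phi (chi A) e 0 = Part.some i) (hi : i ≤ 1) :
    dOracle (Hset A 0) (Hset A 1) e = Part.some i := by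
  have hmem : ∀ j, e ∈ Hset A j ↔ j = i := fun j => by simp [Hset, h]
  refine Part.eq_some_iff.2 ⟨?_, ?_⟩
  · rcases Nat.le_one_iff_eq_zero_or_eq_one.1 hi with rfl | rfl
    · exact Or.inl ((hmem 0).2 rfl)
    · exact Or.inr ((hmem 1).2 rfl)
  · classical
    show (if e ∈ Hset A 1 then 1 else 0) = i
    rw [hmem]; split <;> omega

theorem mem_phi_of_mem_dOracle_Hset {a : ℕ} (ha : a ∈ dOracle (Hset A 0) (Hset A 1) e) :
    a ∈ phi (chi A) e 0 := by
  obtain ⟨hdom, rfl⟩ := ha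
  classical
  show (if e ∈ Hset A 1 then 1 else 0) ∈ phi (chi A) e 0
  split
  · assumption
  · exact hdom.resolve_right ‹_›

end Hset

theorem recursiveInOracle_chi_dOracle_Hset (A : Set ℕ) :
    Nat.RecursiveInOracle (dOracle (Hset A 0) (Hset A 1)) ↑(chi A) :=
  (Nat.RecursiveInOracle.comp .oracle
    (ComputableInOracle.of_primrec OCode.primrec_toNat_query)).of_eq fun n =>
    (Part.bind_some _ _).trans
      (dOracle_Hset_eq_some (phi_toNat_query _ n 0) (chi_le_one A n))

theorem stmt13 (A : Set ℕ) :
    (∃ h : ℕ →. ℕ, Nat.RecursiveInOracle ↑(chi A) h ∧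
        ∀ n : ℕ, ∀ a ∈ dOracle (Hset A 0) (Hset A 1) n, a ∈ h n) ∧
      Nat.RecursiveInOracle (dOracle (Hset A 0) (Hset A 1)) ↑(chi A) := by
  have hphi0 : Nat.RecursiveInOracle ↑(chi A) fun e => phi (chi A) e 0 :=
    (Nat.RecursiveInOracle.comp (recursiveInOracle_phi (chi A)) (ComputableInOracle.of_primrec
      (Primrec₂.natPair.comp Primrec.id (Primrec.const 0)))).of_eq fun e => by simp
  exact ⟨⟨_, hphi0, fun _ _ => mem_phi_of_mem_dOracle_Hset⟩, recursiveInOracle_chi_dOracle_Hset A⟩
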